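/- Let p be a prime, n ≥ 1, and R a Noetherian F-finite 𝔽_p-algebra. Then the Witt vector Frobenius F : Wₙ(R) → Wₙ(R) is a finite ring homomorphism, i.e. Wₙ(R) is finitely generated as a module over itself via F. -/

import Mathlib

namespace TruncatedWittVector

variable {p n : ℕ} [hp : Fact p.Prime] {R S : Type*} [CommRing R] [CommRing S]

theorem truncate_out' (x : TruncatedWittVector p n R) :
    WittVector.truncate n x.out = x :=
  TruncatedWittVector.truncateFun_out x

/-- The ring homomorphism `Wₙ(R) →+* Wₙ(S)` induced coordinatewise by `f : R →+* S`,
i.e. the truncated Witt vector functoriality map `TruncatedWittVector.map`. -/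
noncomputable def map (f : R →+* S) :
    TruncatedWittVector p n R →+* TruncatedWittVector p n S :=
  RingHom.liftOfRightInverse (WittVector.truncate n) TruncatedWittVector.out
    truncate_out'
    ⟨(WittVector.truncate n).comp (WittVector.map f), by
      intro x hx
      have hx' : ∀ i < n, x.coeff i = 0 := (WittVector.mem_ker_truncate n x).mp hx
      have h : ((WittVector.truncate n).comp (WittVector.map f)) x = 0 := by
        rw [RingHom.comp_apply, ← RingHom.mem_ker, WittVector.mem_ker_truncate]
        intro i hi
        rw [WittVector.map_coeff, hx' i hi, map_zero]
      exact RingHom.mem_ker.mpr h⟩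

theorem map_apply (f : R →+* S) (x : TruncatedWittVector p n R) :
    map f x = WittVector.truncate n (WittVector.map f x.out) := by
  conv_lhs => rw [← truncate_out' x]
  exact RingHom.liftOfRightInverse_comp_apply _ _ _ _ x.out

@[simp]
theorem coeff_map (f : R →+* S) (x : TruncatedWittVector p n R) (i : Fin n) :
    (map f x).coeff i = f (x.coeff i) := by
  rw [map_apply, WittVector.coeff_truncate, WittVector.map_coeff, coeff_out]

end TruncatedWittVector

section WVAux

open Function

variable {p : ℕ} [hp : Fact p.Prime] {R : Type*} [CommRing R]

lemma WVAux.iterate_verschiebung_coeff_lt (y : WittVector p R) :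
    ∀ k j : ℕ, j < k → (WittVector.verschiebung^[k] y).coeff j = 0 := by
  intro k
  induction k with
  | zero => intro j hj; omega
  | succ k ih =>
    intro j hj
    rw [Function.iterate_succ_apply']
    match j with
    | 0 => exact WittVector.verschiebung_coeff_zero _
    | Nat.succ j =>
      rw [WittVector.verschiebung_coeff_succ]
      exact ih j (by omega)

lemma WVAux.shift (x : WittVector p R) (k : ℕ) (hx : ∀ j < k, x.coeff j = 0) :
    ∃ y : WittVector p R, x = WittVector.verschiebung^[k] y ∧ y.coeff 0 = x.coeff k := by
  refine ⟨WittVector.mk p (fun i => x.coeff (i + k)), WittVector.ext fun j => ?_, by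
    have h0 := WittVector.iterate_verschiebung_coeff (p := p) (R := R)
      (WittVector.mk p (fun i => x.coeff (i + k))) k 0
    simp [WittVector.coeff_mk]⟩
  rcases lt_or_ge j k with hj | hj
  · rw [WVAux.iterate_verschiebung_coeff_lt _ _ _ hj, hx j hj]
  · obtain ⟨i, rfl⟩ : ∃ i, j = i + k := ⟨j - k, by omega⟩
    rw [WittVector.iterate_verschiebung_coeff, WittVector.coeff_mk]

lemma WVAux.iterate_verschiebung_sub (x y : WittVector p R) :
    ∀ k : ℕ, WittVector.verschiebung^[k] x - WittVector.verschiebung^[k] y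
      = WittVector.verschiebung^[k] (x - y) := by
  intro k
  induction k with
  | zero => simp
  | succ k ih =>
    rw [Function.iterate_succ_apply', Function.iterate_succ_apply',
      Function.iterate_succ_apply', ← ih]
    exact (map_sub (WittVector.verschiebung (p := p) (R := R)) _ _).symm

lemma WVAux.iterate_verschiebung_add (x y : WittVector p R) :
    ∀ k : ℕ, WittVector.verschiebung^[k] x + WittVector.verschiebung^[k] y
      = WittVector.verschiebung^[k] (x + y) := by
  intro k
  induction k with
  | zero => simp
  | succ k ih =>
    rw [Function.iterate_succ_apply', Function.iterate_succ_apply',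
      Function.iterate_succ_apply', ← AddMonoidHom.map_add WittVector.verschiebung, ih]

lemma WVAux.sub_coeff (x y : WittVector p R) (k : ℕ) (hx : ∀ j < k, x.coeff j = 0)
    (hy : ∀ j < k, y.coeff j = 0) :
    (∀ j < k, (x - y).coeff j = 0) ∧ (x - y).coeff k = x.coeff k - y.coeff k := by
  obtain ⟨x', hx', hx0⟩ := WVAux.shift x k hx
  obtain ⟨y', hy', hy0⟩ := WVAux.shift y k hy
  have key : x - y = WittVector.verschiebung^[k] (x' - y') := by
    rw [hx', hy', WVAux.iterate_verschiebung_sub]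
  constructor
  · intro j hj
    rw [key]
    exact WVAux.iterate_verschiebung_coeff_lt _ _ _ hj
  · have h0 := WittVector.iterate_verschiebung_coeff (p := p) (x' - y') k 0
    rw [zero_add] at h0
    have hsub : (x' - y').coeff 0 = x'.coeff 0 - y'.coeff 0 := by
      simpa using map_sub (WittVector.constantCoeff (p := p) (R := R)) x' y'
    rw [key, h0, hsub, hx0, hy0]

lemma WVAux.add_coeff (x y : WittVector p R) (k : ℕ) (hx : ∀ j < k, x.coeff j = 0)
    (hy : ∀ j < k, y.coeff j = 0) :
    (∀ j < k, (x + y).coeff j = 0) ∧ (x + y).coeff k = x.coeff k + y.coeff k := by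
  obtain ⟨x', hx', hx0⟩ := WVAux.shift x k hx
  obtain ⟨y', hy', hy0⟩ := WVAux.shift y k hy
  have key : x + y = WittVector.verschiebung^[k] (x' + y') := by
    rw [hx', hy', WVAux.iterate_verschiebung_add]
  constructor
  · intro j hj
    rw [key]
    exact WVAux.iterate_verschiebung_coeff_lt _ _ _ hj
  · have h0 := WittVector.iterate_verschiebung_coeff (p := p) (x' + y') k 0
    rw [zero_add] at h0
    rw [key, h0, WittVector.add_coeff_zero, hx0, hy0]

lemma WVAux.mul_coeff [CharP R p] (a x : WittVector p R) (k : ℕ)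
    (hx : ∀ j < k, x.coeff j = 0) :
    (∀ j < k, (a * x).coeff j = 0) ∧
      (a * x).coeff k = a.coeff 0 ^ p ^ k * x.coeff k := by
  obtain ⟨y, hxy, hy0⟩ := WVAux.shift x k hx
  have key : a * x = WittVector.verschiebung^[k] (y * WittVector.frobenius^[k] a) := by
    rw [hxy, mul_comm, WittVector.iterate_verschiebung_mul_left]
  constructor
  · intro j hj
    rw [key]
    exact WVAux.iterate_verschiebung_coeff_lt _ _ _ hj
  · have h0 := WittVector.iterate_verschiebung_coeff (p := p)
      (y * WittVector.frobenius^[k] a) k 0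
    rw [zero_add] at h0
    rw [key, h0, WittVector.mul_coeff_zero, WittVector.iterate_frobenius_coeff, hy0]
    ring

end WVAux

section TAux

variable {p n : ℕ} [hp : Fact p.Prime] {R : Type*} [CommRing R]

lemma TAux.out_coeff_lt (x : TruncatedWittVector p n R) (j : ℕ) (hj : j < n) :
    x.out.coeff j = x.coeff ⟨j, hj⟩ :=
  TruncatedWittVector.coeff_out x ⟨j, hj⟩

lemma TAux.out_low_zero (x : TruncatedWittVector p n R) (k : Fin n)
    (hx : ∀ j : Fin n, j < k → x.coeff j = 0) :
    ∀ j < (k : ℕ), x.out.coeff j = 0 := by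
  intro j hj
  have hjn : j < n := lt_trans hj k.isLt
  rw [TAux.out_coeff_lt x j hjn]
  exact hx ⟨j, hjn⟩ hj

lemma TAux.mul_coeff [CharP R p] (a x : TruncatedWittVector p n R) (k : Fin n)
    (hx : ∀ j : Fin n, j < k → x.coeff j = 0) :
    (∀ j : Fin n, j < k → (a * x).coeff j = 0) ∧
      (a * x).coeff k = a.out.coeff 0 ^ p ^ (k : ℕ) * x.coeff k := by
  obtain ⟨h1, h2⟩ := WVAux.mul_coeff a.out x.out k (TAux.out_low_zero x k hx)
  have hax : a * x = WittVector.truncate n (a.out * x.out) := by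
    rw [map_mul, TruncatedWittVector.truncate_out', TruncatedWittVector.truncate_out']
  constructor
  · intro j hj
    rw [hax, WittVector.coeff_truncate]
    exact h1 j hj
  · rw [hax, WittVector.coeff_truncate, h2, TruncatedWittVector.coeff_out]

lemma TAux.sub_coeff (x y : TruncatedWittVector p n R) (k : Fin n)
    (hx : ∀ j : Fin n, j < k → x.coeff j = 0)
    (hy : ∀ j : Fin n, j < k → y.coeff j = 0) :
    (∀ j : Fin n, j < k → (x - y).coeff j = 0) ∧
      (x - y).coeff k = x.coeff k - y.coeff k := by
  obtain ⟨h1, h2⟩ := WVAux.sub_coeff x.out y.out k (TAux.out_low_zero x k hx)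
    (TAux.out_low_zero y k hy)
  have hxy : x - y = WittVector.truncate n (x.out - y.out) := by
    rw [map_sub, TruncatedWittVector.truncate_out', TruncatedWittVector.truncate_out']
  constructor
  · intro j hj
    rw [hxy, WittVector.coeff_truncate]
    exact h1 j hj
  · rw [hxy, WittVector.coeff_truncate, h2, TruncatedWittVector.coeff_out,
      TruncatedWittVector.coeff_out]

lemma TAux.add_coeff (x y : TruncatedWittVector p n R) (k : Fin n)
    (hx : ∀ j : Fin n, j < k → x.coeff j = 0)
    (hy : ∀ j : Fin n, j < k → y.coeff j = 0) :
    (∀ j : Fin n, j < k → (x + y).coeff j = 0) ∧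
      (x + y).coeff k = x.coeff k + y.coeff k := by
  obtain ⟨h1, h2⟩ := WVAux.add_coeff x.out y.out k (TAux.out_low_zero x k hx)
    (TAux.out_low_zero y k hy)
  have hxy : x + y = WittVector.truncate n (x.out + y.out) := by
    rw [map_add, TruncatedWittVector.truncate_out', TruncatedWittVector.truncate_out']
  constructor
  · intro j hj
    rw [hxy, WittVector.coeff_truncate]
    exact h1 j hj
  · rw [hxy, WittVector.coeff_truncate, h2, TruncatedWittVector.coeff_out,
      TruncatedWittVector.coeff_out]

/-- Finite-sum version of `TAux.add_coeff`. -/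
lemma TAux.sum_coeff {ι : Type*} (k : Fin n) (F : Finset ι)
    (f : ι → TruncatedWittVector p n R)
    (hf : ∀ u ∈ F, ∀ j : Fin n, j < k → (f u).coeff j = 0) :
    (∀ j : Fin n, j < k → (∑ u ∈ F, f u).coeff j = 0) ∧
      (∑ u ∈ F, f u).coeff k = ∑ u ∈ F, (f u).coeff k := by
  classical
  induction F using Finset.induction_on with
  | empty => simp [TruncatedWittVector.coeff_zero]
  | @insert u F' hu ih =>
    have hF' := ih (fun v hv => hf v (Finset.mem_insert_of_mem hv))
    have hfu := hf u (Finset.mem_insert_self u F')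
    obtain ⟨h1, h2⟩ := TAux.add_coeff (f u) (∑ v ∈ F', f v) k hfu hF'.1
    rw [Finset.sum_insert hu]
    exact ⟨h1, by rw [h2, hF'.2, Finset.sum_insert hu]⟩

end TAux

/-- From a finite ring endomorphism, extract an explicit finite generating family. -/
lemma RingHom.Finite.exists_finset_gen {B : Type*} [CommRing B] (f : B →+* B)
    (hf : f.Finite) :
    ∃ s : Finset B, ∀ r : B, ∃ a : B → B, r = ∑ t ∈ s, f (a t) * t := by
  letI : Algebra B B := f.toAlgebra
  letI : Module B B := Algebra.toModule
  letI : SMul B B := Algebra.toSMul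
  haveI hF : Module.Finite B B := hf
  obtain ⟨s, hs⟩ := Module.finite_def.mp hF
  refine ⟨s, fun r => ?_⟩
  have hr : r ∈ Submodule.span B (↑s : Set B) := hs ▸ Submodule.mem_top
  obtain ⟨a, -, ha⟩ := Submodule.mem_span_finset.mp hr
  refine ⟨a, ?_⟩
  rw [← ha]
  exact Finset.sum_congr rfl fun t _ => by
    rw [Algebra.smul_def, RingHom.algebraMap_toAlgebra]

/-- Let `p` be a prime, `n ≥ 1`, and `R` a Noetherian `F`-finite `𝔽_p`-algebra.
Then the Witt vector Frobenius `F : Wₙ(R) →+* Wₙ(R)` is a finite ring homomorphism. -/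
theorem truncatedWittVector_frobenius_finite (p n : ℕ) [Fact p.Prime] (hn : 1 ≤ n)
    (R : Type*) [CommRing R] [CharP R p] [IsNoetherianRing R]
    (hFfin : (frobenius R p).Finite) :
    (TruncatedWittVector.map (frobenius R p) :
        TruncatedWittVector p n R →+* TruncatedWittVector p n R).Finite := by
  classical
  haveI : NeZero n := ⟨by omega⟩
  set A := TruncatedWittVector p n R with hA
  set φ : A →+* A := TruncatedWittVector.map (frobenius R p) with hφ
  -- iterated Frobenius is finite, with explicit generators
  have hiter : ∀ m : ℕ, ∃ g : R →+* R, g.Finite ∧ ∀ r, g r = r ^ p ^ m := by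
    intro m
    induction m with
    | zero => exact ⟨RingHom.id R, RingHom.Finite.id R, fun r => by simp⟩
    | succ m ih =>
      obtain ⟨g, hg, hgr⟩ := ih
      refine ⟨g.comp (frobenius R p), hg.comp hFfin, fun r => ?_⟩
      rw [RingHom.comp_apply, frobenius_def, hgr, ← pow_mul, pow_succ']
  have hgen : ∀ m : ℕ, ∃ s : Finset R, ∀ r : R, ∃ a : R → R,
      r = ∑ t ∈ s, a t ^ p ^ m * t := by
    intro m
    obtain ⟨g, hg, hgr⟩ := hiter m
    obtain ⟨s, hs⟩ := hg.exists_finset_gen g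
    refine ⟨s, fun r => ?_⟩
    obtain ⟨a, ha⟩ := hs r
    exact ⟨a, by rw [ha]; exact Finset.sum_congr rfl fun t _ => by rw [hgr]⟩
  choose t ht using hgen
  -- the module structure via φ
  letI : Algebra A A := φ.toAlgebra
  letI : Module A A := Algebra.toModule
  letI : SMul A A := Algebra.toSMul
  have hsmul : ∀ a x : A, a • x = φ a * x := fun a x => by
    rw [Algebra.smul_def, RingHom.algebraMap_toAlgebra]
  -- building blocks
  set e : Fin n → R → A := fun k r => TruncatedWittVector.mk p
    (fun i => if i = k then r else 0) with he
  have he_coeff : ∀ (k : Fin n) (r : R) (i : Fin n),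
      (e k r).coeff i = if i = k then r else 0 := fun k r i => by
    rw [he]; exact TruncatedWittVector.coeff_mk _ _
  set S : Finset A := Finset.univ.biUnion
    (fun k : Fin n => (t ((k : ℕ) + 1)).image (e k)) with hS
  -- each summand term
  have hterm : ∀ (k : Fin n) (v u : R),
      (∀ j : Fin n, j < k → (e 0 v • e k u).coeff j = 0) ∧
        (e 0 v • e k u).coeff k = v ^ p ^ ((k : ℕ) + 1) * u := by
    intro k v u
    have hlow : ∀ j : Fin n, j < k → (e k u).coeff j = 0 := by
      intro j hj
      rw [he_coeff, if_neg (Fin.ne_of_lt hj)]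
    obtain ⟨h1, h2⟩ := TAux.mul_coeff (φ (e 0 v)) (e k u) k hlow
    rw [hsmul]
    refine ⟨h1, ?_⟩
    have hc0 : (φ (e 0 v)).out.coeff 0 = v ^ p := by
      have h0n : (0 : ℕ) < n := by omega
      rw [TAux.out_coeff_lt _ 0 h0n]
      have : (⟨0, h0n⟩ : Fin n) = 0 := rfl
      rw [this, hφ, TruncatedWittVector.coeff_map, he_coeff, if_pos rfl, frobenius_def]
    rw [h2, hc0, he_coeff, if_pos rfl, ← pow_mul, ← pow_succ']
  -- the main induction
  have main : ∀ m : ℕ, ∀ x : A, (∀ j : Fin n, (j : ℕ) < n - m → x.coeff j = 0) →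
      x ∈ Submodule.span A (↑S : Set A) := by
    intro m
    induction m with
    | zero =>
      intro x hx
      have hx0 : x = 0 := TruncatedWittVector.ext fun i => by
        rw [hx i (by simpa using i.isLt), TruncatedWittVector.coeff_zero]
      rw [hx0]
      exact Submodule.zero_mem _
    | succ m ih =>
      intro x hx
      by_cases hcase : n ≤ m
      · exact ih x (fun j hj => hx j (by omega))
      have hkn : n - (m + 1) < n := by omega
      set k : Fin n := ⟨n - (m + 1), hkn⟩ with hk
      have hxlow : ∀ j : Fin n, j < k → x.coeff j = 0 := fun j hj =>
        hx j (by simpa [hk, Fin.lt_def] using hj)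
      obtain ⟨a, ha⟩ := ht ((k : ℕ) + 1) (x.coeff k)
      set s : A := ∑ u ∈ t ((k : ℕ) + 1), e 0 (a u) • e k u with hs
      have hsmem : s ∈ Submodule.span A (↑S : Set A) := by
        refine Submodule.sum_mem _ fun u hu => Submodule.smul_mem _ _ (Submodule.subset_span ?_)
        rw [hS]
        simp only [Finset.coe_biUnion, Finset.coe_univ, Set.mem_iUnion, Finset.coe_image,
          Set.mem_image, Finset.mem_coe]
        exact ⟨k, trivial, u, hu, rfl⟩
      obtain ⟨hslow, hsk⟩ := TAux.sum_coeff k (t ((k : ℕ) + 1))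
        (fun u => e 0 (a u) • e k u) (fun u _ => (hterm k (a u) u).1)
      have hsk' : s.coeff k = x.coeff k := by
        rw [hs] at *
        rw [hsk, ha]
        exact Finset.sum_congr rfl fun u _ => (hterm k (a u) u).2
      obtain ⟨hdlow, hdk⟩ := TAux.sub_coeff x s k hxlow hslow
      have hxs : x - s ∈ Submodule.span A (↑S : Set A) := by
        refine ih (x - s) fun j hj => ?_
        have hnm : n - m = (k : ℕ) + 1 := by simp [hk]; omega
        rw [hnm] at hj
        rcases lt_or_eq_of_le (Nat.lt_succ_iff.mp hj) with hlt | heq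
        · exact hdlow j (by simpa [hk, Fin.lt_def] using hlt)
        · have hjk : j = k := Fin.ext (by simpa [hk] using heq)
          rw [hjk, hdk, hsk', sub_self]
      have hx' : x = (x - s) + s := by ring
      rw [hx']
      exact Submodule.add_mem _ hxs hsmem
  exact Module.Finite.of_fg_top ⟨S, eq_top_iff.mpr fun x _ =>
    main n x (fun j hj => absurd hj (by omega))⟩
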